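/- Let G be a finite group, N a normal subgroup of G, and π a set of prime numbers containing every prime divisor of the index [G:N]. Suppose that every π-element g of G satisfies G = N · C_G(g), where C_G(g) is the centralizer of g in G. Then G/N is abelian, and for every x ∈ G the number of conjugacy classes of G that consist of π-elements and are contained in the coset xN is equal to k_π(N). -/

import Mathlib

/-- A `π`-element: every prime divisor of the order of `g` lies in `π`. -/
def IsPiElement {G : Type*} [Monoid G] (π : Set ℕ) (g : G) : Prop :=
  ∀ p : ℕ, p.Prime → p ∣ orderOf g → p ∈ π

/-!
Every coset of `N` contains a π-element, namely the π-part of any representative: π'-elements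
lie in `N` because `|G : N|` is a π-number. A π-element `s` commutes with a representative of
every coset, so `sN` commutes with every coset, and `G/N` is abelian.

For the count, Burnside's lemma for conjugation gives `k · |G|` for the number of commuting
pairs `(u, y)` with `u` a π-element of the coset `q`, where `k` is the number of classes of
π-elements in `q`. The involution `(u, y) ↦ (y_π, u y_π')` identifies these with the commuting
pairs in which `u` is a π-element and `y ∈ q`. As `C_G(u)` meets every coset of `N`,
`|C_G(u) ∩ q| = |C_N(u)|` does not depend on `q`, so `k` does not either. For `q = N` the pairs
number `∑ |C_G(u)| = |G : N| ∑ |C_N(u)|` over the π-elements `u ∈ N`, which is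
`|G : N| · k_π(N) · |N| = k_π(N) · |G|`.
-/

namespace Nat

open Classical in
noncomputable def piPart (π : Set ℕ) (n : ℕ) : ℕ :=
  ∏ p ∈ n.primeFactors with p ∈ π, p ^ n.factorization p

variable (π : Set ℕ) {n : ℕ}

theorem piPart_mul_piPart_compl (hn : n ≠ 0) : piPart π n * piPart πᶜ n = n := by
  classical
  unfold piPart
  convert Finset.prod_filter_mul_prod_filter_not n.primeFactors (· ∈ π) _
  exact prod_primeFactors_pow_factorization hn

theorem mem_of_dvd_piPart {p : ℕ} (hp : p.Prime) (h : p ∣ piPart π n) : p ∈ π := by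
  classical
  obtain ⟨q, hq, hpq⟩ := (Prime.dvd_finsetProd_iff hp.prime _).mp h
  rw [Finset.mem_filter] at hq
  rw [(prime_dvd_prime_iff_eq hp (prime_of_mem_primeFactors hq.1)).mp (hp.dvd_of_dvd_pow hpq)]
  exact hq.2

theorem coprime_of_primes_mem_compl {a b : ℕ} (ha : ∀ p, p.Prime → p ∣ a → p ∈ π)
    (hb : ∀ p, p.Prime → p ∣ b → p ∈ πᶜ) : Coprime a b :=
  coprime_of_dvd fun p hp hpa hpb => hb p hp hpb (ha p hp hpa)

theorem coprime_piPart_compl : Coprime (piPart π n) (piPart πᶜ n) :=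
  coprime_of_primes_mem_compl π (fun _ hp => mem_of_dvd_piPart π hp)
    (fun _ hp => mem_of_dvd_piPart πᶜ hp)

theorem dvd_piPart_of_dvd {m : ℕ} (hm : ∀ p, p.Prime → p ∣ m → p ∈ π) (hn : n ≠ 0) (h : m ∣ n) :
    m ∣ piPart π n := by
  have hcop : Coprime m (piPart πᶜ n) :=
    coprime_of_primes_mem_compl π hm (fun _ hp => mem_of_dvd_piPart πᶜ hp)
  exact hcop.dvd_of_dvd_mul_right (by rwa [piPart_mul_piPart_compl π hn])

-- `e ≡ 1` modulo the π-part of `n` and `e ≡ 0` modulo its π'-part, by Bézout.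
noncomputable def piIdempotent (π : Set ℕ) (n : ℕ) : ℤ :=
  gcdB (piPart π n) (piPart πᶜ n) * piPart πᶜ n

theorem piPart_compl_dvd_piIdempotent : (piPart πᶜ n : ℤ) ∣ piIdempotent π n :=
  dvd_mul_left _ _

theorem piPart_dvd_piIdempotent_sub_one : (piPart π n : ℤ) ∣ piIdempotent π n - 1 := by
  have h := gcd_eq_gcd_ab (piPart π n) (piPart πᶜ n)
  rw [(coprime_piPart_compl π).gcd_eq_one, cast_one] at h
  exact ⟨-gcdA (piPart π n) (piPart πᶜ n), by rw [piIdempotent]; linarith⟩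

end Nat

theorem isPiElement_of_orderOf_dvd {G : Type*} [Monoid G] {π : Set ℕ} {g : G} {m : ℕ}
    (hm : ∀ p, p.Prime → p ∣ m → p ∈ π) (h : orderOf g ∣ m) : IsPiElement π g :=
  fun p hp hpg => hm p hp (hpg.trans h)

theorem IsPiElement.conj {G : Type*} [Group G] {π : Set ℕ} {g : G} (hg : IsPiElement π g)
    (h : G) : IsPiElement π (h * g * h⁻¹) := by
  rwa [IsPiElement, ← MulAut.conj_apply, MulEquiv.orderOf_eq]

theorem Subgroup.isPiElement_coe {G : Type*} [Group G] {π : Set ℕ} {H : Subgroup G} {a : H} :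
    IsPiElement π (a : G) ↔ IsPiElement π a := by
  rw [IsPiElement, Subgroup.orderOf_coe, IsPiElement]

theorem orderOf_zpow_dvd_of_dvd_mul {G : Type*} [Group G] {y : G} {k : ℤ} {m : ℕ}
    (h : (orderOf y : ℤ) ∣ k * m) : orderOf (y ^ k) ∣ m :=
  orderOf_dvd_of_pow_eq_one <| by
    rwa [← zpow_natCast, ← zpow_mul, ← orderOf_dvd_iff_zpow_eq_one]

section PiPart

variable {G : Type*} [Group G] (π : Set ℕ)

noncomputable def piPart (y : G) : G := y ^ Nat.piIdempotent π (orderOf y)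

theorem Commute.piPart_right {x y : G} (h : Commute x y) : Commute x (piPart π y) :=
  h.zpow_right _

theorem commute_piPart_piPart_compl (y : G) : Commute (piPart π y) (piPart πᶜ y) :=
  (Commute.refl y).zpow_zpow _ _

variable [Finite G]

theorem orderOf_piPart_dvd (y : G) : orderOf (piPart π y) ∣ Nat.piPart π (orderOf y) := by
  apply orderOf_zpow_dvd_of_dvd_mul
  conv_lhs => rw [← Nat.piPart_mul_piPart_compl π (orderOf_pos y).ne', Nat.cast_mul, mul_comm]
  exact mul_dvd_mul_right (Nat.piPart_compl_dvd_piIdempotent π) _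

theorem isPiElement_piPart (y : G) : IsPiElement π (piPart π y) :=
  isPiElement_of_orderOf_dvd (fun _ hp => Nat.mem_of_dvd_piPart π hp) (orderOf_piPart_dvd π y)

theorem piPart_mul_piPart_compl (y : G) : piPart π y * piPart πᶜ y = y := by
  set n := orderOf y
  have hn : n ≠ 0 := (orderOf_pos y).ne'
  have ha := Nat.piPart_dvd_piIdempotent_sub_one π (n := n)
  have hb := Nat.piPart_compl_dvd_piIdempotent π (n := n)
  have ha' := Nat.piPart_compl_dvd_piIdempotent πᶜ (n := n)
  have hb' := Nat.piPart_dvd_piIdempotent_sub_one πᶜ (n := n)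
  rw [compl_compl] at ha'
  have hcop := Nat.isCoprime_iff_coprime.mpr (Nat.coprime_piPart_compl π (n := n))
  have hdvd : (n : ℤ) ∣ Nat.piIdempotent π n + Nat.piIdempotent πᶜ n - 1 := by
    conv_lhs => rw [← Nat.piPart_mul_piPart_compl π hn, Nat.cast_mul]
    refine hcop.mul_dvd ?_ ?_
    · simpa [add_sub_right_comm] using dvd_add ha ha'
    · simpa [add_sub_assoc] using dvd_add hb hb'
  rw [piPart, piPart, ← zpow_add, ← sub_add_cancel (_ + _) (1 : ℤ), zpow_add,
    orderOf_dvd_iff_zpow_eq_one.mp hdvd, one_mul, zpow_one]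

theorem piPart_mul_eq {s v : G} (hs : IsPiElement π s) (hv : IsPiElement πᶜ v)
    (h : Commute s v) : piPart π (s * v) = s := by
  have hn := (orderOf_pos (s * v)).ne'
  have hord : orderOf (s * v) = orderOf s * orderOf v :=
    h.orderOf_mul_eq_mul_orderOf_of_coprime (Nat.coprime_of_primes_mem_compl π hs hv)
  have hsa : orderOf s ∣ Nat.piPart π (orderOf (s * v)) :=
    Nat.dvd_piPart_of_dvd π hs hn (hord ▸ dvd_mul_right _ _)
  have hvb : orderOf v ∣ Nat.piPart πᶜ (orderOf (s * v)) :=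
    Nat.dvd_piPart_of_dvd πᶜ hv hn (hord ▸ dvd_mul_left _ _)
  have hs1 : s ^ Nat.piIdempotent π (orderOf (s * v)) = s := by
    rw [← mul_inv_eq_one, ← zpow_sub_one, ← orderOf_dvd_iff_zpow_eq_one]
    exact (Int.natCast_dvd_natCast.mpr hsa).trans (Nat.piPart_dvd_piIdempotent_sub_one π)
  have hv1 : v ^ Nat.piIdempotent π (orderOf (s * v)) = 1 := by
    rw [← orderOf_dvd_iff_zpow_eq_one]
    exact (Int.natCast_dvd_natCast.mpr hvb).trans (Nat.piPart_compl_dvd_piIdempotent π)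
  rw [piPart, h.mul_zpow, hs1, hv1, mul_one]

theorem piPart_compl_mul_eq {s v : G} (hs : IsPiElement π s) (hv : IsPiElement πᶜ v)
    (h : Commute s v) : piPart πᶜ (s * v) = v := by
  have := piPart_mul_piPart_compl π (s * v)
  rwa [piPart_mul_eq π hs hv h, mul_right_inj] at this

end PiPart

section Quotient

variable {G : Type*} [Group G] (π : Set ℕ) (N : Subgroup G) [N.Normal]

theorem mem_of_isPiElement_compl (hπ : ∀ p : ℕ, p.Prime → p ∣ N.index → p ∈ π) {v : G}
    (hv : IsPiElement πᶜ v) : v ∈ N := by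
  rw [← QuotientGroup.eq_one_iff, ← orderOf_eq_one_iff]
  exact Nat.eq_one_of_dvd_coprimes (Nat.coprime_of_primes_mem_compl π hπ hv)
    (orderOf_dvd_natCard _) (orderOf_map_dvd (QuotientGroup.mk' N) v)

theorem mk_piPart [Finite G] (hπ : ∀ p : ℕ, p.Prime → p ∣ N.index → p ∈ π) (y : G) :
    ((piPart π y : G) : G ⧸ N) = y := by
  conv_rhs => rw [← piPart_mul_piPart_compl π y]
  rw [QuotientGroup.mk_mul,
    (QuotientGroup.eq_one_iff _).mpr (mem_of_isPiElement_compl π N hπ (isPiElement_piPart πᶜ y)),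
    mul_one]

theorem exists_commute_mk_eq {u : G}
    (hu : ∀ x : G, ∃ n ∈ N, ∃ c ∈ Subgroup.centralizer ({u} : Set G), x = n * c) (q : G ⧸ N) :
    ∃ c, Commute u c ∧ (c : G ⧸ N) = q := by
  obtain ⟨x, rfl⟩ := QuotientGroup.mk_surjective q
  obtain ⟨n, hn, c, hc, rfl⟩ := hu x
  refine ⟨c, (Subgroup.mem_centralizer_singleton_iff.mp hc).symm, ?_⟩
  rw [QuotientGroup.mk_mul, (QuotientGroup.eq_one_iff n).mpr hn, one_mul]

theorem quotient_mul_comm [Finite G] (hπ : ∀ p : ℕ, p.Prime → p ∣ N.index → p ∈ π)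
    (hcov : ∀ u : G, IsPiElement π u → ∀ q : G ⧸ N, ∃ c, Commute u c ∧ (c : G ⧸ N) = q)
    (a b : G ⧸ N) : a * b = b * a := by
  obtain ⟨x, rfl⟩ := QuotientGroup.mk_surjective a
  obtain ⟨c, hc, rfl⟩ := hcov (piPart π x) (isPiElement_piPart π x) b
  rw [← mk_piPart π N hπ x, ← QuotientGroup.mk_mul, hc.eq, QuotientGroup.mk_mul]

end Quotient

theorem card_commute_pairs_eq_card_conjClasses_mul_card {H : Type*} [Group H] (Φ : H → Prop)
    (hΦ : ∀ g h : H, Φ g → Φ (h * g * h⁻¹)) :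
    Nat.card {p : H × H // Φ p.1 ∧ Commute p.1 p.2} =
      Nat.card {c : ConjClasses H // ∀ g ∈ c.carrier, Φ g} * Nat.card H := by
  let S : SubMulAction (ConjAct H) H :=
    { carrier := {g | Φ g}
      smul_mem' := fun h g hg => by simpa [ConjAct.smul_def] using hΦ g (ConjAct.ofConjAct h) hg }
  have pairs : {p : H × H // Φ p.1 ∧ Commute p.1 p.2} ≃
      {hg : ConjAct H × S // hg.1 • hg.2 = hg.2} :=
    { toFun := fun p => ⟨(ConjAct.toConjAct p.1.2, ⟨p.1.1, p.2.1⟩), by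
        ext; simpa [ConjAct.smul_def, mul_inv_eq_iff_eq_mul] using p.2.2.symm.eq⟩
      invFun := fun hg => ⟨(hg.1.2, ConjAct.ofConjAct hg.1.1), hg.1.2.2, by
        have := congrArg Subtype.val hg.2
        simp only [SetLike.val_smul, ConjAct.smul_def, mul_inv_eq_iff_eq_mul] at this
        exact this.symm⟩
      left_inv := fun _ => rfl
      right_inv := fun _ => rfl }
  have orbits : Quotient (MulAction.orbitRel (ConjAct H) S) ≃
      {c : ConjClasses H // ∀ g ∈ c.carrier, Φ g} := by
    refine Equiv.ofBijective (Quotient.lift (fun g : S => ⟨ConjClasses.mk g.1, fun h hh => ?_⟩)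
      fun a b hab => ?_) ⟨?_, ?_⟩
    · rw [ConjClasses.mem_carrier_iff_mk_eq, ConjClasses.mk_eq_mk_iff_isConj] at hh
      obtain ⟨c, rfl⟩ := isConj_iff.mp hh.symm
      exact hΦ _ c g.2
    · exact Subtype.ext <| ConjClasses.mk_eq_mk_iff_isConj.mpr <|
        ConjAct.mem_orbit_conjAct.mp (SubMulAction.mem_orbit_subMul_iff.mp hab)
    · rintro ⟨a⟩ ⟨b⟩ hab
      exact Quotient.sound <| SubMulAction.mem_orbit_subMul_iff.mpr <|
        ConjAct.mem_orbit_conjAct.mpr <|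
          ConjClasses.mk_eq_mk_iff_isConj.mp (congrArg Subtype.val hab)
    · rintro ⟨c, hc⟩
      obtain ⟨g, rfl⟩ := ConjClasses.mk_surjective c
      exact ⟨Quotient.mk _ ⟨g, hc g ConjClasses.mem_carrier_mk⟩, rfl⟩
  rw [Nat.card_congr (pairs.trans ((Equiv.subtypeProdEquivSigmaSubtype _).trans
    (MulAction.sigmaFixedByEquivOrbitsProdGroup _ _))), Nat.card_prod, Nat.card_congr orbits,
    Nat.card_congr ConjAct.toConjAct.toEquiv.symm]

theorem Nat.card_subtype_prod_eq_sum {α β : Type*} [Fintype α] [Finite β] (R : α → β → Prop) :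
    Nat.card {p : α × β // R p.1 p.2} = ∑ a, Nat.card {b // R a b} := by
  rw [Nat.card_congr (Equiv.subtypeProdEquivSigmaSubtype R), Nat.card_sigma]

section Counting

variable {G : Type*} [Group G] (N : Subgroup G) [N.Normal]

theorem card_commute_mk_eq_of_exists {u : G} {q : G ⧸ N}
    (hq : ∃ c, Commute u c ∧ (c : G ⧸ N) = q) :
    Nat.card {y // Commute u y ∧ (y : G ⧸ N) = q} =
      Nat.card {y // Commute u y ∧ (y : G ⧸ N) = 1} := by
  obtain ⟨c, hc, rfl⟩ := hq
  exact Nat.card_congr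
    { toFun := fun y => ⟨c⁻¹ * y, hc.inv_right.mul_right y.2.1, by simp [y.2.2]⟩
      invFun := fun y => ⟨c * y, hc.mul_right y.2.1, by simp [y.2.2]⟩
      left_inv := fun y => by simp
      right_inv := fun y => by simp }

theorem card_commute_eq_card_quotient_mul [Finite G] {u : G}
    (hu : ∀ q : G ⧸ N, ∃ c, Commute u c ∧ (c : G ⧸ N) = q) :
    Nat.card {y // Commute u y} =
      Nat.card (G ⧸ N) * Nat.card {y // Commute u y ∧ (y : G ⧸ N) = 1} := by
  have := Fintype.ofFinite (G ⧸ N)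
  calc Nat.card {y // Commute u y}
      = Nat.card {p : (G ⧸ N) × G // Commute u p.2 ∧ (p.2 : G ⧸ N) = p.1} :=
        Nat.card_congr
          { toFun := fun y => ⟨(y.1, y.1), y.2, rfl⟩
            invFun := fun p => ⟨p.1.2, p.2.1⟩
            left_inv := fun _ => rfl
            right_inv := by
              rintro ⟨⟨q, y⟩, -, h⟩
              obtain rfl : (y : G ⧸ N) = q := h
              rfl }
    _ = ∑ q : G ⧸ N, Nat.card {y // Commute u y ∧ (y : G ⧸ N) = q} :=
        Nat.card_subtype_prod_eq_sum fun q y => Commute u y ∧ (y : G ⧸ N) = q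
    _ = _ := by
        simp only [card_commute_mk_eq_of_exists N (hu _), Finset.sum_const, Finset.card_univ,
          smul_eq_mul, Nat.card_eq_fintype_card]

end Counting

section Swap

variable {G : Type*} [Group G] (π : Set ℕ)

-- An involution of the commuting pairs `(u, y)` with `u` a π-element. Modulo a normal subgroup
-- containing all π'-elements, it carries the coset of `u` to the second entry.
noncomputable def piSwap (p : G × G) : G × G := (piPart π p.2, p.1 * piPart πᶜ p.2)

theorem commute_piSwap {p : G × G} (h : Commute p.1 p.2) :
    Commute (piSwap π p).1 (piSwap π p).2 :=
  (h.piPart_right π).symm.mul_right (commute_piPart_piPart_compl π p.2)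

theorem piSwap_piSwap [Finite G] {p : G × G} (hp : IsPiElement π p.1) (h : Commute p.1 p.2) :
    piSwap π (piSwap π p) = p := by
  have hv := isPiElement_piPart πᶜ p.2
  have hc := h.piPart_right πᶜ
  simp only [piSwap]
  rw [piPart_mul_eq π hp hv hc, piPart_compl_mul_eq π hp hv hc, piPart_mul_piPart_compl]

end Swap

section Main

variable {G : Type*} [Group G] [Finite G] (π : Set ℕ) (N : Subgroup G) [N.Normal]

theorem card_pairs_fst_mk_eq_card_pairs_snd_mk
    (hπ : ∀ p : ℕ, p.Prime → p ∣ N.index → p ∈ π) (q : G ⧸ N) :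
    Nat.card {p : G × G // (IsPiElement π p.1 ∧ (p.1 : G ⧸ N) = q) ∧ Commute p.1 p.2} =
      Nat.card {p : G × G // IsPiElement π p.1 ∧ Commute p.1 p.2 ∧ (p.2 : G ⧸ N) = q} := by
  have mk_fst (p : G × G) : ((piSwap π p).1 : G ⧸ N) = p.2 := mk_piPart π N hπ p.2
  have mk_snd (p : G × G) : ((piSwap π p).2 : G ⧸ N) = p.1 := by
    rw [piSwap, QuotientGroup.mk_mul, (QuotientGroup.eq_one_iff _).mpr
      (mem_of_isPiElement_compl π N hπ (isPiElement_piPart πᶜ p.2)), mul_one]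
  exact Nat.card_congr
    { toFun := fun p => ⟨piSwap π p.1, isPiElement_piPart π _, commute_piSwap π p.2.2,
        (mk_snd p.1).trans p.2.1.2⟩
      invFun := fun p => ⟨piSwap π p.1, ⟨isPiElement_piPart π _, (mk_fst p.1).trans p.2.2.2⟩,
        commute_piSwap π p.2.2.1⟩
      left_inv := fun p => Subtype.ext (piSwap_piSwap π p.2.1.1 p.2.2)
      right_inv := fun p => Subtype.ext (piSwap_piSwap π p.2.1 p.2.2.1) }

theorem card_pairs_snd_mk_eq_card_pairs_snd_mk_one
    (hcov : ∀ u : G, IsPiElement π u → ∀ q : G ⧸ N, ∃ c, Commute u c ∧ (c : G ⧸ N) = q)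
    (q : G ⧸ N) :
    Nat.card {p : G × G // IsPiElement π p.1 ∧ Commute p.1 p.2 ∧ (p.2 : G ⧸ N) = q} =
      Nat.card {p : G × G // IsPiElement π p.1 ∧ Commute p.1 p.2 ∧ (p.2 : G ⧸ N) = 1} := by
  have := Fintype.ofFinite G
  rw [Nat.card_subtype_prod_eq_sum fun u y : G => IsPiElement π u ∧ Commute u y ∧ (y : G ⧸ N) = q,
    Nat.card_subtype_prod_eq_sum fun u y : G => IsPiElement π u ∧ Commute u y ∧ (y : G ⧸ N) = 1]
  refine Finset.sum_congr rfl fun u _ => ?_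
  by_cases hu : IsPiElement π u
  · simpa only [hu, true_and] using card_commute_mk_eq_of_exists N (hcov u hu q)
  · simp only [hu, false_and, Nat.card_of_isEmpty]

theorem card_pairs_fst_mk_one_eq
    (hcov : ∀ u : G, IsPiElement π u → ∀ q : G ⧸ N, ∃ c, Commute u c ∧ (c : G ⧸ N) = q) :
    Nat.card {p : G × G // (IsPiElement π p.1 ∧ (p.1 : G ⧸ N) = 1) ∧ Commute p.1 p.2} =
      Nat.card (G ⧸ N) * Nat.card {p : N × N // IsPiElement π p.1 ∧ Commute p.1 p.2} := by
  have := Fintype.ofFinite G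
  have toN : {p : G × G // (IsPiElement π p.1 ∧ (p.1 : G ⧸ N) = 1) ∧
      Commute p.1 p.2 ∧ (p.2 : G ⧸ N) = 1} ≃ {p : N × N // IsPiElement π p.1 ∧ Commute p.1 p.2} :=
    { toFun := fun p => ⟨(⟨p.1.1, (QuotientGroup.eq_one_iff _).mp p.2.1.2⟩,
          ⟨p.1.2, (QuotientGroup.eq_one_iff _).mp p.2.2.2⟩),
        Subgroup.isPiElement_coe.mp p.2.1.1, Subtype.ext p.2.2.1.eq⟩
      invFun := fun p => ⟨(p.1.1, p.1.2), ⟨Subgroup.isPiElement_coe.mpr p.2.1,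
          (QuotientGroup.eq_one_iff _).mpr p.1.1.2⟩,
        congrArg Subtype.val p.2.2.eq, (QuotientGroup.eq_one_iff _).mpr p.1.2.2⟩
      left_inv := fun _ => rfl
      right_inv := fun _ => rfl }
  rw [← Nat.card_congr toN, Nat.card_subtype_prod_eq_sum
      fun u y : G => (IsPiElement π u ∧ (u : G ⧸ N) = 1) ∧ Commute u y,
    Nat.card_subtype_prod_eq_sum
      fun u y : G => (IsPiElement π u ∧ (u : G ⧸ N) = 1) ∧ Commute u y ∧ (y : G ⧸ N) = 1,
    Finset.mul_sum]
  refine Finset.sum_congr rfl fun u _ => ?_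
  by_cases hu : IsPiElement π u ∧ (u : G ⧸ N) = 1
  · simpa only [hu, true_and] using card_commute_eq_card_quotient_mul N (hcov u hu.1)
  · simp only [hu, false_and, Nat.card_of_isEmpty, mul_zero]

theorem card_conjClasses_isPiElement_mk_eq (hπ : ∀ p : ℕ, p.Prime → p ∣ N.index → p ∈ π)
    (hcov : ∀ u : G, IsPiElement π u → ∀ q : G ⧸ N, ∃ c, Commute u c ∧ (c : G ⧸ N) = q)
    (q : G ⧸ N) :
    Nat.card {c : ConjClasses G // ∀ g ∈ c.carrier, IsPiElement π g ∧ (g : G ⧸ N) = q} =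
      Nat.card {c : ConjClasses N // ∀ y ∈ c.carrier, IsPiElement π y} := by
  have hconj (q : G ⧸ N) (g h : G) (hg : IsPiElement π g ∧ (g : G ⧸ N) = q) :
      IsPiElement π (h * g * h⁻¹) ∧ (↑(h * g * h⁻¹) : G ⧸ N) = q := by
    refine ⟨hg.1.conj h, ?_⟩
    rw [QuotientGroup.mk_mul, QuotientGroup.mk_mul, QuotientGroup.mk_inv,
      quotient_mul_comm π N hπ hcov (h : G ⧸ N), mul_inv_cancel_right, hg.2]
  apply Nat.eq_of_mul_eq_mul_right (Nat.card_pos (α := G))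
  rw [← card_commute_pairs_eq_card_conjClasses_mul_card _ (hconj q),
    card_pairs_fst_mk_eq_card_pairs_snd_mk π N hπ,
    card_pairs_snd_mk_eq_card_pairs_snd_mk_one π N hcov,
    ← card_pairs_fst_mk_eq_card_pairs_snd_mk π N hπ, card_pairs_fst_mk_one_eq π N hcov,
    card_commute_pairs_eq_card_conjClasses_mul_card _ fun g h hg => hg.conj h,
    Subgroup.card_eq_card_quotient_mul_card_subgroup N]
  ring

end Main

/-- Corollary 2.4: if `π` contains all prime divisors of `[G:N]` and every
`π`-element `g` of `G` satisfies `G = N ⬝ C_G(g)`, then `G/N` is abelian and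
the number of conjugacy classes of `π`-elements of `G` in any coset of `N`
equals `k_π(N)`. -/
theorem stmt_2 {G : Type*} [Group G] [Finite G] (N : Subgroup G) [N.Normal]
    (π : Set ℕ)
    (hπ : ∀ p : ℕ, p.Prime → p ∣ N.index → p ∈ π)
    (hfac : ∀ g : G, IsPiElement π g →
      ∀ x : G, ∃ n ∈ N, ∃ c ∈ Subgroup.centralizer ({g} : Set G), x = n * c) :
    (∀ x y : G ⧸ N, x * y = y * x) ∧
    ∀ x : G,
      Nat.card {c : ConjClasses G //
          (∀ g ∈ c.carrier, IsPiElement π g) ∧ c.carrier ⊆ {g : G | x⁻¹ * g ∈ N}} =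
      Nat.card {c : ConjClasses N // ∀ y ∈ c.carrier, IsPiElement π y} := by
  have hcov (u : G) (hu : IsPiElement π u) := exists_commute_mk_eq N (hfac u hu)
  refine ⟨quotient_mul_comm π N hπ hcov, fun x => ?_⟩
  rw [← card_conjClasses_isPiElement_mk_eq π N hπ hcov x]
  refine Nat.card_congr (Equiv.subtypeEquivRight fun c => ?_)
  simp only [Set.subset_def, Set.mem_ofPred_eq, ← QuotientGroup.eq, forall_and, eq_comm]
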